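/- Let x : ℝ → ℝ³ be a unit-speed spacelike curve on an oriented timelike surface in Minkowski 3-space, whose Darboux frame satisfies the constant-coefficient equations T' = k_g g − ε k_n n, g' = k_g T + ε τ_g n, n' = k_n T + τ_g g with constants k_g, k_n, τ_g and ε = ⟨T,T⟩ = ±1. Then x is periodic of period ω > 0 if and only if τ_g = 0, ε k_n² − k_g² > 0, and √(ε k_n² − k_g²) = 2kπ/ω for some positive integer k. -/

import Mathlib

/-!
Every coordinate `X` of `x` solves `X'''' = -m X''` with `m = ε k_n² - k_g² - ε τ_g²`, since the
Darboux matrix satisfies `A³ = -m A`. Write `u, v, w` for `X', X'', X'''`. Then `w + m u` is a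
first integral, and `v + m X` has it as derivative; periodicity of `X` forces it to vanish. Over all
coordinates this says that row `0` of `A² + m` is zero, i.e. `τ_g = 0`, and then `u'' = -m u`.
If `m ≤ 0`, the periodic function `u u'` has derivative `u'² - m u² ≥ 0`, so `u` is constant and
the periodicity of `X` gives `u = 0`; this is impossible for all coordinates, as `F 0` is
invertible. If `m > 0`, `(u, u'/√m)` rotates with angular speed `√m`, and returns to itself after
time `ω` exactly when `√m ω ∈ 2πℤ`.
-/

open Matrix Real Function

namespace Function.Periodic

variable {E : Type*} [NormedAddCommGroup E] [NormedSpace ℝ E] {f f' : ℝ → E} {c : E} {ω : ℝ}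

theorem hasDerivAt_periodic (hf : Periodic f ω) (hd : ∀ t, HasDerivAt f (f' t) t) :
    Periodic f' ω := fun t =>
  ((hd (t + ω)).comp_add_const t ω).unique (by rw [hf.funext]; exact hd t)

theorem eq_zero_of_hasDerivAt_const (hf : Periodic f ω) (hω : ω ≠ 0)
    (hd : ∀ t, HasDerivAt f c t) : c = 0 := by
  have hconst : ∀ t, HasDerivAt (fun t => f t - t • c) 0 t := fun t => by
    simpa using (hd t).fun_sub ((hasDerivAt_id t).smul_const c)
  have h := is_const_of_deriv_eq_zero (fun t => (hconst t).differentiableAt)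
    (fun t => (hconst t).deriv) ω 0
  have hfω : f ω = f 0 := by simpa using hf 0
  simpa [hfω, hω] using h

theorem eq_zero_of_hasDerivAt_nonneg {g g' : ℝ → ℝ} (hg : Periodic g ω) (hω : 0 < ω)
    (hd : ∀ t, HasDerivAt g (g' t) t) (hnn : 0 ≤ g') (t : ℝ) : g' t = 0 := by
  have hmono := monotone_of_hasDerivAt_nonneg hd hnn
  have hconst : g = fun _ => g 0 := funext fun s => by
    obtain ⟨y, ⟨hy0, hyω⟩, hsy⟩ := hg.exists_mem_Ico₀ hω s
    have hgω : g ω = g 0 := by simpa using hg 0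
    rw [hsy]
    exact le_antisymm (hgω ▸ hmono hyω.le) (hmono hy0)
  exact (hd t).unique (hconst ▸ hasDerivAt_const t (g 0))

end Function.Periodic

section Harmonic

variable {u v : ℝ → ℝ} {μ : ℝ}

theorem harmonic_eq_zero (hμ : μ ≠ 0) (hu : ∀ t, HasDerivAt u (v t) t)
    (hv : ∀ t, HasDerivAt v (-μ ^ 2 * u t) t) (hu0 : u 0 = 0) (hv0 : v 0 = 0) (t : ℝ) :
    u t = 0 ∧ v t = 0 := by
  have henergy : ∀ t, HasDerivAt (fun t => μ ^ 2 * u t ^ 2 + v t ^ 2) 0 t := fun t =>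
    ((((hu t).fun_pow 2).const_mul (μ ^ 2)).fun_add ((hv t).fun_pow 2)).congr_deriv (by ring)
  have h := is_const_of_deriv_eq_zero (fun t => (henergy t).differentiableAt)
    (fun t => (henergy t).deriv) t 0
  simp only [hu0, hv0, ne_eq, OfNat.ofNat_ne_zero, not_false_eq_true, zero_pow, mul_zero,
    add_zero] at h
  have hu2 : 0 ≤ μ ^ 2 * u t ^ 2 := by positivity
  have hv2 : 0 ≤ v t ^ 2 := by positivity
  exact ⟨by simpa [hμ] using (by linarith : μ ^ 2 * u t ^ 2 = 0),
    by simpa using (by linarith : v t ^ 2 = 0)⟩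

theorem harmonic_eq_cos_sin (hμ : μ ≠ 0) (hu : ∀ t, HasDerivAt u (v t) t)
    (hv : ∀ t, HasDerivAt v (-μ ^ 2 * u t) t) (t : ℝ) :
    u t = u 0 * cos (μ * t) + v 0 / μ * sin (μ * t) ∧
      v t = v 0 * cos (μ * t) - μ * u 0 * sin (μ * t) := by
  have hcos (t : ℝ) : HasDerivAt (fun t => cos (μ * t)) (-(μ * sin (μ * t))) t := by
    simpa [mul_comm] using ((hasDerivAt_id t).const_mul μ).cos
  have hsin (t : ℝ) : HasDerivAt (fun t => sin (μ * t)) (μ * cos (μ * t)) t := by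
    simpa [mul_comm] using ((hasDerivAt_id t).const_mul μ).sin
  have h := harmonic_eq_zero hμ
    (u := fun t => u t - (u 0 * cos (μ * t) + v 0 / μ * sin (μ * t)))
    (v := fun t => v t - (v 0 * cos (μ * t) - μ * u 0 * sin (μ * t)))
    (fun t => ((hu t).fun_sub (((hcos t).const_mul (u 0)).fun_add
      ((hsin t).const_mul (v 0 / μ)))).congr_deriv (by field_simp; ring))
    (fun t => ((hv t).fun_sub (((hcos t).const_mul (v 0)).fun_sub
      ((hsin t).const_mul (μ * u 0)))).congr_deriv (by field_simp; ring))
    (by simp) (by simp) t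
  constructor <;> linarith [h.1, h.2]

theorem harmonic_eq_zero_of_cos_ne_one (hμ : μ ≠ 0) (hu : ∀ t, HasDerivAt u (v t) t)
    (hv : ∀ t, HasDerivAt v (-μ ^ 2 * u t) t) {ω : ℝ} (huω : u ω = u 0) (hvω : v ω = v 0)
    (hcos : cos (μ * ω) ≠ 1) : u 0 = 0 := by
  obtain ⟨hu', hv'⟩ := harmonic_eq_cos_sin hμ hu hv ω
  have hdet : μ * u 0 * (2 - 2 * cos (μ * ω)) = 0 := by
    field_simp at hu'
    linear_combination (1 - cos (μ * ω)) * (hu' - μ * huω) + sin (μ * ω) * (hv' - hvω)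
      - μ * u 0 * sin_sq_add_cos_sq (μ * ω)
  have h2 : 2 - 2 * cos (μ * ω) ≠ 0 := fun h => hcos (by linarith)
  simpa [hμ, h2] using hdet

theorem harmonic_periodic (hμ : μ ≠ 0) (hu : ∀ t, HasDerivAt u (v t) t)
    (hv : ∀ t, HasDerivAt v (-μ ^ 2 * u t) t) {ω : ℝ} (hcos : cos (μ * ω) = 1) :
    Periodic u ω := fun t => by
  have hsin : sin (μ * ω) = 0 := by nlinarith [sin_sq_add_cos_sq (μ * ω)]
  rw [(harmonic_eq_cos_sin hμ hu hv (t + ω)).1, (harmonic_eq_cos_sin hμ hu hv t).1, mul_add,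
    cos_add, sin_add, hcos, hsin]
  ring

end Harmonic

section FourthOrder

variable {X u v w : ℝ → ℝ} {m ω : ℝ}

theorem add_mul_eq_of_hasDerivAt (hu : ∀ t, HasDerivAt u (v t) t)
    (hw : ∀ t, HasDerivAt w (-m * v t) t) (t : ℝ) : w t + m * u t = w 0 + m * u 0 :=
  is_const_of_deriv_eq_zero (fun t => ((hw t).add ((hu t).const_mul m)).differentiableAt)
    (fun t => ((hw t).fun_add ((hu t).const_mul m)).deriv.trans (by ring)) t 0

theorem hasDerivAt_neg_mul_of_add_mul_eq_zero (hu : ∀ t, HasDerivAt u (v t) t)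
    (hv : ∀ t, HasDerivAt v (w t) t) (hw : ∀ t, HasDerivAt w (-m * v t) t)
    (hc : w 0 + m * u 0 = 0) (t : ℝ) : HasDerivAt v (-m * u t) t :=
  (hv t).congr_deriv (by linarith [add_mul_eq_of_hasDerivAt hu hw t])

theorem eq_zero_of_periodic_of_nonpos (hX : ∀ t, HasDerivAt X (u t) t)
    (hu : ∀ t, HasDerivAt u (v t) t) (hv : ∀ t, HasDerivAt v (-m * u t) t) (hm : m ≤ 0)
    (hω : 0 < ω) (hper : Periodic X ω) : u 0 = 0 := by
  have hper_u := hper.hasDerivAt_periodic hX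
  have hper_v := hper_u.hasDerivAt_periodic hu
  -- `u v` is periodic with derivative `v² - m u² ≥ 0`, hence constant
  have hv0 (t : ℝ) : v t = 0 := by
    have h := (hper_u.mul hper_v).eq_zero_of_hasDerivAt_nonneg hω
      (fun t => (hu t).fun_mul (hv t))
      (fun t => show 0 ≤ v t * v t + u t * (-m * u t) by
        nlinarith [mul_self_nonneg (v t), mul_self_nonneg (u t)]) t
    nlinarith [mul_self_nonneg (v t), mul_self_nonneg (u t)]
  have hconst (t : ℝ) : u t = u 0 :=
    is_const_of_deriv_eq_zero (fun t => (hu t).differentiableAt)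
      (fun t => (hu t).deriv.trans (hv0 t)) t 0
  exact hper.eq_zero_of_hasDerivAt_const hω.ne' fun t => hconst t ▸ hX t

theorem add_mul_eq_zero_of_periodic (hX : ∀ t, HasDerivAt X (u t) t)
    (hu : ∀ t, HasDerivAt u (v t) t) (hv : ∀ t, HasDerivAt v (w t) t)
    (hw : ∀ t, HasDerivAt w (-m * v t) t) (hω : 0 < ω) (hper : Periodic X ω) :
    w 0 + m * u 0 = 0 ∧ (u 0 ≠ 0 → 0 < m ∧ cos (√m * ω) = 1) := by
  have hper_u := hper.hasDerivAt_periodic hX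
  have hper_v := hper_u.hasDerivAt_periodic hu
  have hc : w 0 + m * u 0 = 0 :=
    Periodic.eq_zero_of_hasDerivAt_const (f := fun t => v t + m * X t)
      (fun t => by simp only [hper_v t, hper t]) hω.ne'
      fun t => ((hv t).fun_add ((hX t).const_mul m)).congr_deriv
        (add_mul_eq_of_hasDerivAt hu hw t)
  refine ⟨hc, fun hu0 => ?_⟩
  have hv' := hasDerivAt_neg_mul_of_add_mul_eq_zero hu hv hw hc
  have hm : 0 < m :=
    lt_of_not_ge fun hm => hu0 (eq_zero_of_periodic_of_nonpos hX hu hv' hm hω hper)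
  rw [← Real.sq_sqrt hm.le] at hv'
  exact ⟨hm, by_contra fun hcos => hu0 <| harmonic_eq_zero_of_cos_ne_one
    (Real.sqrt_pos.2 hm).ne' hu hv' (by simpa using hper_u 0) (by simpa using hper_v 0) hcos⟩

theorem periodic_of_add_mul_eq_zero (hX : ∀ t, HasDerivAt X (u t) t)
    (hu : ∀ t, HasDerivAt u (v t) t) (hv : ∀ t, HasDerivAt v (w t) t)
    (hw : ∀ t, HasDerivAt w (-m * v t) t) (hc : w 0 + m * u 0 = 0) (hm : 0 < m)
    (hcos : cos (√m * ω) = 1) : Periodic X ω := by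
  have hv' := hasDerivAt_neg_mul_of_add_mul_eq_zero hu hv hw hc
  have hper_v := (harmonic_periodic (Real.sqrt_pos.2 hm).ne' hu
    (by rwa [Real.sq_sqrt hm.le]) hcos).hasDerivAt_periodic hu
  have hconst (t : ℝ) : X t + v t / m = X 0 + v 0 / m :=
    is_const_of_deriv_eq_zero
      (fun t => ((hX t).fun_add ((hv' t).div_const m)).differentiableAt)
      (fun t => ((hX t).fun_add ((hv' t).div_const m)).deriv.trans (by field_simp; ring)) t 0
  intro t
  have h := hconst (t + ω)
  rw [hper_v t, ← hconst t] at h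
  linarith

end FourthOrder

theorem Matrix.exists_ne_zero_of_isUnit {n R : Type*} [Fintype n] [DecidableEq n] [CommRing R]
    [Nontrivial R] {M : Matrix n n R} (hM : IsUnit M) (i : n) : ∃ j, M i j ≠ 0 := by
  by_contra! h
  exact (isUnit_iff_isUnit_det M).1 hM |>.ne_zero (det_eq_zero_of_row_eq_zero i h)

theorem Matrix.row_eq_zero_of_mul_isUnit {n R : Type*} [Fintype n] [DecidableEq n] [CommRing R]
    {M N : Matrix n n R} (hM : IsUnit M) {i : n} (h : (N * M) i = 0) : N i = 0 := by
  rw [← mul_nonsing_inv_cancel_right M N ((isUnit_iff_isUnit_det M).1 hM)]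
  ext j
  rw [mul_apply]
  simp [congrFun h]

theorem hasDerivAt_mul_apply {l ι κ : Type*} [Fintype ι] (B : Matrix l ι ℝ)
    {M M' : ℝ → Matrix ι κ ℝ} (h : ∀ s i j, HasDerivAt (fun t => M t i j) (M' s i j) s) (s : ℝ)
    (i : l) (j : κ) :
    HasDerivAt (fun t => (B * M t) i j) ((B * M' s) i j) s := by
  simp only [mul_apply]
  exact HasDerivAt.fun_sum fun k _ => (h s k j).const_mul (B i k)

theorem periodic_iff_of_mul_mul_self_eq {ι : Type*} [Fintype ι] [DecidableEq ι]
    {A : Matrix ι ι ℝ} {m ω : ℝ} (hA : A * A * A = -m • A) (hω : 0 < ω) {F : ℝ → Matrix ι ι ℝ}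
    (hF : ∀ s i j, HasDerivAt (fun t => F t i j) ((A * F s) i j) s) (hF0 : IsUnit (F 0)) (i : ι)
    {x : ℝ → ι → ℝ} (hx : ∀ s, HasDerivAt x (F s i) s) :
    Periodic x ω ↔ (A * A + m • 1) i = 0 ∧ 0 < m ∧ cos (√m * ω) = 1 := by
  have hX (j : ι) (t : ℝ) : HasDerivAt (fun t => x t j) (F t i j) t := hasDerivAt_pi.1 (hx t) j
  have hv := hasDerivAt_mul_apply A hF
  have hw (j : ι) (s : ℝ) :
      HasDerivAt (fun t => (A * (A * F t)) i j) (-m * (A * F s) i j) s :=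
    (hasDerivAt_mul_apply A hv s i j).congr_deriv (by
      rw [← Matrix.mul_assoc, ← Matrix.mul_assoc, hA, smul_mul, Matrix.smul_apply, smul_eq_mul])
  have hrow : (A * A + m • 1) i = 0 ↔ ∀ j, (A * (A * F 0)) i j + m * F 0 i j = 0 := by
    have hprod : ((A * A + m • 1) * F 0) i = fun j => (A * (A * F 0)) i j + m * F 0 i j := by
      ext j
      simp [add_mul, Matrix.mul_assoc]
    refine ⟨fun h j => ?_, fun h => row_eq_zero_of_mul_isUnit hF0 (hprod.trans (funext h))⟩
    rw [← congrFun hprod j, mul_apply]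
    simp [congrFun h]
  constructor
  · intro hper
    have key (j : ι) := add_mul_eq_zero_of_periodic (hX j) (fun t => hF t i j)
      (fun t => hv t i j) (hw j) hω fun t => congrFun (hper t) j
    obtain ⟨j, hj⟩ := exists_ne_zero_of_isUnit hF0 i
    exact ⟨hrow.2 fun j => (key j).1, (key j).2 hj⟩
  · rintro ⟨hc, hm, hcos⟩ t
    funext j
    exact periodic_of_add_mul_eq_zero (hX j) (fun t => hF t i j) (fun t => hv t i j) (hw j)
      (hrow.1 hc j) hm hcos t

def darbouxMatrix (kg kn τg ε : ℝ) : Matrix (Fin 3) (Fin 3) ℝ :=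
  !![0, kg, -ε * kn; kg, 0, ε * τg; kn, τg, 0]

section Darboux

variable {kg kn τg ε : ℝ}

-- Cayley–Hamilton: the trace and the determinant vanish; the principal `2 × 2` minors sum to `m`.
theorem darbouxMatrix_mul_mul_self :
    darbouxMatrix kg kn τg ε * darbouxMatrix kg kn τg ε * darbouxMatrix kg kn τg ε =
      -(ε * kn ^ 2 - kg ^ 2 - ε * τg ^ 2) • darbouxMatrix kg kn τg ε := by
  ext i j
  fin_cases i <;> fin_cases j <;> simp [darbouxMatrix, mul_apply, Fin.sum_univ_three] <;> ring

theorem darbouxMatrix_mul_self_add_smul_one_row_zero_eq_zero_iff (hε : ε ≠ 0) :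
    (darbouxMatrix kg kn τg ε * darbouxMatrix kg kn τg ε +
      (ε * kn ^ 2 - kg ^ 2 - ε * τg ^ 2) • 1) 0 = 0 ↔ τg = 0 := by
  have hrow : (darbouxMatrix kg kn τg ε * darbouxMatrix kg kn τg ε +
      (ε * kn ^ 2 - kg ^ 2 - ε * τg ^ 2) • 1) 0 = (ε * τg) • ![-τg, -kn, kg] := by
    ext j
    fin_cases j <;> simp [darbouxMatrix] <;> ring
  rw [hrow]
  constructor
  · intro h
    simpa [hε] using congrFun h 0
  · rintro rfl
    simp

end Darboux

theorem cos_mul_eq_one_iff {μ ω : ℝ} (hμ : 0 < μ) (hω : 0 < ω) :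
    cos (μ * ω) = 1 ↔ ∃ k : ℕ, 0 < k ∧ μ = 2 * k * π / ω := by
  rw [cos_eq_one_iff]
  constructor
  · rintro ⟨k, hk⟩
    have hk0 : 0 < k := by
      have : (0 : ℝ) < k * (2 * π) := hk ▸ mul_pos hμ hω
      exact_mod_cast pos_of_mul_pos_left this (by positivity)
    lift k to ℕ using hk0.le
    refine ⟨k, by exact_mod_cast hk0, ?_⟩
    rw [eq_div_iff hω.ne']
    push_cast at hk
    linarith
  · rintro ⟨k, -, rfl⟩
    exact ⟨k, by field_simp; push_cast; ring⟩

theorem hasDerivAt_of_eq_add_integral {E : Type*} [NormedAddCommGroup E] [NormedSpace ℝ E]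
    [CompleteSpace E] {f x : ℝ → E} (hf : Continuous f)
    (hx : ∀ s, x s = x 0 + ∫ t in (0 : ℝ)..s, f t) (s : ℝ) : HasDerivAt x (f s) s := by
  rw [show x = fun s => x 0 + ∫ t in (0 : ℝ)..s, f t from funext hx]
  exact (hf.integral_hasStrictDerivAt 0 s).hasDerivAt.const_add (x 0)

/-- Closedness criterion for a curve with constant Darboux curvatures on a timelike surface in
Minkowski 3-space: with `F' = A·F` (Darboux frame), `F(0)` invertible, `x' = T =` first row of
`F`, the curve `x` is ω-periodic iff `τ_g = 0`, `ε k_n² − k_g² > 0`, and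
`√(ε k_n² − k_g²) = 2kπ/ω` for some positive integer `k`. -/
theorem stmt_11 (kg kn τg ε : ℝ) (hε : ε = 1 ∨ ε = -1)
    (A : Matrix (Fin 3) (Fin 3) ℝ)
    (hA : A = !![0, kg, -ε * kn; kg, 0, ε * τg; kn, τg, 0])
    (ω : ℝ) (hω : 0 < ω)
    (F : ℝ → Matrix (Fin 3) (Fin 3) ℝ)
    (hF : ∀ s i j, HasDerivAt (fun t => F t i j) ((A * F s) i j) s)
    (hF0 : IsUnit (F 0))
    (x : ℝ → Fin 3 → ℝ)
    (hx : ∀ s, x s = x 0 + ∫ t in (0:ℝ)..s, F t 0) :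
    (∀ s, x (s + ω) = x s) ↔
      (τg = 0 ∧ 0 < ε * kn ^ 2 - kg ^ 2 ∧
        ∃ k : ℕ, 0 < k ∧ Real.sqrt (ε * kn ^ 2 - kg ^ 2) = 2 * k * Real.pi / ω) := by
  obtain rfl : A = darbouxMatrix kg kn τg ε := hA
  have hε0 : ε ≠ 0 := by rcases hε with rfl | rfl <;> norm_num
  have hT : Continuous fun t => F t 0 :=
    continuous_pi fun j => continuous_iff_continuousAt.2 fun s => (hF s 0 j).continuousAt
  change Periodic x ω ↔ _
  rw [periodic_iff_of_mul_mul_self_eq darbouxMatrix_mul_mul_self hω hF hF0 0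
    (hasDerivAt_of_eq_add_integral hT hx),
    darbouxMatrix_mul_self_add_smul_one_row_zero_eq_zero_iff hε0]
  refine and_congr_right fun hτ => ?_
  subst hτ
  simp only [ne_eq, OfNat.ofNat_ne_zero, not_false_eq_true, zero_pow, mul_zero, sub_zero]
  exact and_congr_right fun hm => cos_mul_eq_one_iff (sqrt_pos.2 hm) hω
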